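/- arXiv:1907.04677 — 6 statements merged into one kernel-verified Lean document; each statement's English description precedes it below -/
import Mathlib

section
/- Let p ≥ 5 be an integer. For every n ∈ ℕ, the partial sum of the black metallic sequence equals the corresponding term of the white metallic sequence: ∑_{i=0}^{n} b i = m n (in the paper's notation, B n = m n for all n). -/
/-- The white metallic sequence: `m 0 = 1`, `m 1 = p - 2`,
`m (n+2) = (p-2) * m (n+1) - m n`. -/
def mseq (p : ℕ) : ℕ → ℤ
  | 0 => 1
  | 1 => (p : ℤ) - 2
  | n + 2 => ((p : ℤ) - 2) * mseq p (n + 1) - mseq p n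

/-- The black metallic sequence: `b 0 = 1`, `b 1 = p - 3`,
`b (n+2) = (p-2) * b (n+1) - b n`. -/
def bseq (p : ℕ) : ℕ → ℤ
  | 0 => 1
  | 1 => (p : ℤ) - 3
  | n + 2 => ((p : ℤ) - 2) * bseq p (n + 1) - bseq p n

lemma bseq_eq_sub (p : ℕ) : ∀ n, bseq p (n + 1) = mseq p (n + 1) - mseq p n := by
  intro n
  induction n using Nat.strong_induction_on with
  | _ n ih =>
    match n with
    | 0 => simp [bseq, mseq]; ring
    | 1 => simp [bseq, mseq]; ring
    | k + 2 =>
      have h1 := ih (k + 1) (by omega)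
      have h2 := ih k (by omega)
      show bseq p (k + 3) = _
      have : bseq p (k + 3) = ((p : ℤ) - 2) * bseq p (k + 2) - bseq p (k + 1) := rfl
      rw [this, h1, h2]
      show _ = (((p:ℤ)-2) * mseq p (k+2) - mseq p (k+1)) - (((p:ℤ)-2) * mseq p (k+1) - mseq p k)
      ring

/-- for every `n`, `∑_{i=0}^{n} b i = m n` (i.e. `B n = m n`). -/
theorem Bsum_eq_mseq (p : ℕ) (hp : 5 ≤ p) (n : ℕ) :
    (∑ i ∈ Finset.range (n + 1), bseq p i) = mseq p n := by
  induction n with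
  | zero => simp [bseq, mseq]
  | succ k ih =>
    rw [Finset.sum_range_succ, ih, bseq_eq_sub]
    ring
end

section
/- Let p ≥ 5 be an integer. For every n ∈ ℕ one has (p−3)·m (n+1) + ∑_{k=1}^{n} (p−4)·m k + (p−3)·m 0 = m (n+2). -/
/-- for every `n`,
`(p-3) m (n+1) + ∑_{k=1}^{n} (p-4) m k + (p-3) m 0 = m (n+2)`. -/
theorem code_of_mseq (p : ℕ) (hp : 5 ≤ p) (n : ℕ) :
    ((p : ℤ) - 3) * mseq p (n + 1)
        + (∑ k ∈ Finset.Icc 1 n, ((p : ℤ) - 4) * mseq p k)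
        + ((p : ℤ) - 3) * mseq p 0
      = mseq p (n + 2) := by
  induction n with
  | zero => simp [mseq]; ring
  | succ n ih =>
    rw [Finset.sum_Icc_succ_top (by omega : 1 ≤ n + 1)]
    have h2 : mseq p (n + 2) = ((p : ℤ) - 2) * mseq p (n + 1) - mseq p n := rfl
    have h3 : mseq p (n + 3) = ((p : ℤ) - 2) * mseq p (n + 2) - mseq p (n + 1) := rfl
    rw [show n + 1 + 2 = n + 3 from rfl, h3]
    nlinarith [ih, h2]
end

section
/- Let p ≥ 5 be an integer. Every natural number n admits a metallic representation: there is a finitely supported sequence of digits a : ℕ → ℕ with a i ≤ p − 3 for all i such that n = ∑_i (a i)·(m i). -/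
lemma mseq_rec (p n : ℕ) :
    mseq p (n + 2) = ((p : ℤ) - 2) * mseq p (n + 1) - mseq p n := rfl

lemma mseq_mono (p : ℕ) (hp : 5 ≤ p) (n : ℕ) :
    1 ≤ mseq p n ∧ mseq p n < mseq p (n + 1) := by
  have hp' : (5 : ℤ) ≤ (p : ℤ) := by exact_mod_cast hp
  induction n using Nat.twoStepInduction with
  | zero =>
      have h1 : mseq p 1 = (p : ℤ) - 2 := rfl
      have h0 : mseq p 0 = 1 := rfl
      rw [h0, h1]; constructor <;> linarith
  | one =>
      have h2 : mseq p 2 = ((p : ℤ) - 2) * mseq p 1 - mseq p 0 := rfl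
      have h1 : mseq p 1 = (p : ℤ) - 2 := rfl
      have h0 : mseq p 0 = 1 := rfl
      rw [h2, h1, h0]; constructor
      · linarith
      · nlinarith
  | more n ih1 ih2 =>
      obtain ⟨a1, a2⟩ := ih1
      obtain ⟨b1, b2⟩ := ih2
      have e : mseq p (n + 3) = ((p : ℤ) - 2) * mseq p (n + 2) - mseq p (n + 1) := rfl
      have e2 : mseq p (n + 2) = ((p : ℤ) - 2) * mseq p (n + 1) - mseq p n := rfl
      constructor
      · nlinarith
      · rw [e]; nlinarith

lemma mseq_pos (p : ℕ) (hp : 5 ≤ p) (n : ℕ) : 1 ≤ mseq p n := (mseq_mono p hp n).1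

lemma mseq_succ_le (p : ℕ) (hp : 5 ≤ p) (n : ℕ) :
    mseq p (n + 1) ≤ ((p : ℤ) - 2) * mseq p n := by
  cases n with
  | zero =>
      have h1 : mseq p 1 = (p : ℤ) - 2 := rfl
      have h0 : mseq p 0 = 1 := rfl
      rw [h0, h1]; ring_nf; rfl
  | succ n =>
      have e : mseq p (n + 2) = ((p : ℤ) - 2) * mseq p (n + 1) - mseq p n := rfl
      have := mseq_pos p hp n
      rw [e]; linarith

lemma mseq_lower (p : ℕ) (hp : 5 ≤ p) (n : ℕ) : (n : ℤ) < mseq p n := by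
  induction n with
  | zero => simp [mseq]
  | succ n ih =>
      have := (mseq_mono p hp n).2
      push_cast
      omega

lemma rep_aux (p : ℕ) (hp : 5 ≤ p) :
    ∀ n : ℕ, ∀ k : ℕ, (n : ℤ) < mseq p k →
      ∃ a : ℕ →₀ ℕ, (∀ i, a i ≤ p - 3) ∧ (∀ i, k ≤ i → a i = 0) ∧
        (n : ℤ) = a.sum (fun i c => (c : ℤ) * mseq p i) := by
  intro n
  induction n using Nat.strong_induction_on with
  | _ n ih =>
  intro k hk
  rcases Nat.eq_zero_or_pos n with rfl | hn
  · exact ⟨0, by simp, by simp, by simp⟩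
  have h1n : (1 : ℤ) ≤ (n : ℤ) := by exact_mod_cast hn
  set P : ℕ → Prop := fun j => mseq p j ≤ (n : ℤ) with hP
  have hdec : DecidablePred P := fun j => by unfold P; infer_instance
  set j := Nat.findGreatest P k with hj
  have hw : P 0 := by unfold P; show mseq p 0 ≤ (n : ℤ); exact h1n
  have hspec : mseq p j ≤ (n : ℤ) := Nat.findGreatest_spec (Nat.zero_le k) hw
  have hjk : j ≤ k := Nat.findGreatest_le k
  have hjlt : j < k := by
    rcases lt_or_eq_of_le hjk with h | h
    · exact h
    · exfalso; rw [h] at hspec; linarith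
  have hnext : (n : ℤ) < mseq p (j + 1) := by
    by_contra h
    push_neg at h
    exact Nat.findGreatest_is_greatest (Nat.lt_succ_self j) (by omega) h
  set M := (mseq p j).toNat with hMdef
  have hM : (M : ℤ) = mseq p j := Int.toNat_of_nonneg (by linarith [mseq_pos p hp j])
  have hMpos : 0 < M := by
    have := mseq_pos p hp j
    omega
  have hnlt : (n : ℤ) < ((p : ℤ) - 2) * (M : ℤ) := by
    rw [hM]
    exact lt_of_lt_of_le hnext (mseq_succ_le p hp j)
  have hnltn : n < (p - 2) * M := by
    have h2 : ((p - 2 : ℕ) : ℤ) = (p : ℤ) - 2 := by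
      have : 2 ≤ p := by omega
      push_cast [this]; ring
    exact_mod_cast h2 ▸ hnlt
  set d := n / M with hd
  set r := n % M with hr
  have hdlt : d < p - 2 := (Nat.div_lt_iff_lt_mul hMpos).2 (by omega)
  have hdle : d ≤ p - 3 := by omega
  have hrM : r < M := Nat.mod_lt _ hMpos
  have hMn : M ≤ n := by
    have : (M : ℤ) ≤ (n : ℤ) := hM ▸ hspec
    exact_mod_cast this
  have hd1 : 1 ≤ d := (Nat.one_le_div_iff hMpos).2 hMn
  have hrn : r < n := lt_of_lt_of_le hrM hMn
  have hrj : (r : ℤ) < mseq p j := by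
    rw [← hM]; exact_mod_cast hrM
  obtain ⟨a', ha1, ha2, ha3⟩ := ih r hrn j hrj
  refine ⟨a' + Finsupp.single j d, ?_, ?_, ?_⟩
  · intro i
    by_cases hij : i = j
    · have h0 : a' i = 0 := ha2 i (le_of_eq hij.symm)
      simp only [Finsupp.add_apply, Finsupp.single_apply, if_pos hij.symm, h0]
      omega
    · simp only [Finsupp.add_apply, Finsupp.single_apply,
        if_neg (fun h : j = i => hij h.symm), Nat.add_zero]
      exact ha1 i
  · intro i hi
    have hji : j < i := lt_of_lt_of_le hjlt hi
    have h1 : a' i = 0 := ha2 i (le_of_lt hji)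
    simp [Finsupp.add_apply, Finsupp.single_apply, h1, Nat.ne_of_lt hji]
  · rw [Finsupp.sum_add_index' (fun i => by simp) (fun i c1 c2 => by push_cast; ring)]
    rw [Finsupp.sum_single_index (by simp)]
    have hdm : M * d + r = n := Nat.div_add_mod n M
    have : (M : ℤ) * (d : ℤ) + (r : ℤ) = (n : ℤ) := by exact_mod_cast hdm
    rw [← ha3, hM] at *
    linarith [this]

/-- every natural number admits a metallic representation: a
finitely supported sequence of digits `a i ≤ p - 3` with `n = ∑ i, a i * m i`. -/
theorem exists_metallic_representation (p : ℕ) (hp : 5 ≤ p) (n : ℕ) :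
    ∃ a : ℕ →₀ ℕ, (∀ i, a i ≤ p - 3) ∧
      (n : ℤ) = a.sum (fun i c => (c : ℤ) * mseq p i) := by
  obtain ⟨a, h1, _, h3⟩ := rep_aux p hp n n (mseq_lower p hp n)
  exact ⟨a, h1, h3⟩
end

section
/- Let p ≥ 5 be an integer. Every positive integer n has exactly one metallic representation avoiding the forbidden pattern: there is a unique finitely supported sequence of digits a : ℕ → ℕ with a i ≤ p − 3 for all i, n = ∑_i (a i)·(m i), and such that there are no indices i < j with a i = a j = p − 3 and a k = p − 4 for all k with i < k < j. -/
/-- The forbidden pattern `d c^* d` (with `d = p - 3`, `c = p - 4`) does not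
occur among the digits `a`. -/
def NoForbiddenPattern (p : ℕ) (a : ℕ →₀ ℕ) : Prop :=
  ¬ ∃ i j : ℕ, i < j ∧ a i = p - 3 ∧ a j = p - 3 ∧
      ∀ k, i < k → k < j → a k = p - 4

namespace MetallicAux

/-- The value of a digit string. -/
def val (p : ℕ) (a : ℕ →₀ ℕ) : ℤ := a.sum fun i c => (c : ℤ) * mseq p i

/-- All digits are at most `p - 3`. -/
def Digits (p : ℕ) (a : ℕ →₀ ℕ) : Prop := ∀ i, a i ≤ p - 3

/-- All digits at indices `≥ N` vanish. -/
def Low (N : ℕ) (a : ℕ →₀ ℕ) : Prop := ∀ i, N ≤ i → a i = 0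

/-- There is no `d c^*` suffix ending right below `N`. -/
def BCond (p N : ℕ) (a : ℕ →₀ ℕ) : Prop :=
  ¬ ∃ i, i < N ∧ a i = p - 3 ∧ ∀ k, i < k → k < N → a k = p - 4

lemma mb_rec (p : ℕ) : ∀ N, mseq p (N+1) = ((p:ℤ) - 3) * mseq p N + bseq p N ∧
    bseq p (N+1) = ((p:ℤ) - 4) * mseq p N + bseq p N := by
  intro N
  induction N with
  | zero =>
    constructor
    · show (p:ℤ) - 2 = ((p:ℤ)-3) * 1 + 1; ring
    · show (p:ℤ) - 3 = ((p:ℤ)-4) * 1 + 1; ring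
  | succ n ih =>
    obtain ⟨h1, h2⟩ := ih
    constructor
    · show ((p:ℤ) - 2) * mseq p (n+1) - mseq p n = _
      linear_combination h1 - h2
    · show ((p:ℤ) - 2) * bseq p (n+1) - bseq p n = _
      linear_combination ((p:ℤ)-3) * h2 - ((p:ℤ)-4) * h1

lemma pos (p : ℕ) (hp : 5 ≤ p) : ∀ N, 1 ≤ mseq p N ∧ 1 ≤ bseq p N := by
  have hp' : (5:ℤ) ≤ (p:ℤ) := by exact_mod_cast hp
  intro N
  induction N with
  | zero => exact ⟨le_refl 1, le_refl 1⟩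
  | succ n ih =>
    obtain ⟨h1, h2⟩ := ih
    obtain ⟨e1, e2⟩ := mb_rec p n
    constructor
    · rw [e1]; nlinarith
    · rw [e2]; nlinarith

lemma m_ge (p : ℕ) (hp : 5 ≤ p) : ∀ N : ℕ, (N:ℤ) + 1 ≤ mseq p N := by
  have hp' : (5:ℤ) ≤ (p:ℤ) := by exact_mod_cast hp
  intro N
  induction N with
  | zero => norm_num [mseq]
  | succ n ih =>
    obtain ⟨e1, _⟩ := mb_rec p n
    obtain ⟨h1, h2⟩ := pos p hp n
    rw [e1]; push_cast; nlinarith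

lemma val_add_single (p : ℕ) (a : ℕ →₀ ℕ) (N t : ℕ) :
    val p (a + Finsupp.single N t) = val p a + (t:ℤ) * mseq p N := by
  rw [val, Finsupp.sum_add_index' (by simp) (fun i b c => by push_cast; ring)]
  rw [Finsupp.sum_single_index (by simp)]
  rfl

lemma val_erase_add (p : ℕ) (a : ℕ →₀ ℕ) (N : ℕ) :
    val p a = val p (a.erase N) + (a N : ℤ) * mseq p N := by
  conv_lhs => rw [← Finsupp.single_add_erase N a]
  rw [val, Finsupp.sum_add_index' (by simp) (fun i b c => by push_cast; ring)]
  rw [Finsupp.sum_single_index (by simp)]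
  rw [add_comm]
  rfl

/-- The key bound: the value of a valid string below `N` is `< mseq p N`, and
`< bseq p N` if moreover there is no `d c^*` suffix. -/
lemma bound (p : ℕ) (hp : 5 ≤ p) : ∀ N,
    (∀ a : ℕ →₀ ℕ, Digits p a → NoForbiddenPattern p a → Low N a →
      val p a < mseq p N) ∧
    (∀ a : ℕ →₀ ℕ, Digits p a → NoForbiddenPattern p a → Low N a →
      BCond p N a → val p a < bseq p N) := by
  have hp' : (5:ℤ) ≤ (p:ℤ) := by exact_mod_cast hp
  intro N
  induction N with
  | zero =>
    have h0 : ∀ a : ℕ →₀ ℕ, Low 0 a → val p a = 0 := by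
      intro a ha
      have : a = 0 := Finsupp.ext fun i => ha i (Nat.zero_le i)
      simp [this, val]
    constructor
    · intro a _ _ hl; rw [h0 a hl]; show (0:ℤ) < 1; norm_num
    · intro a _ _ hl _; rw [h0 a hl]; show (0:ℤ) < 1; norm_num
  | succ N ih =>
    obtain ⟨ihW, ihB⟩ := ih
    obtain ⟨e1, e2⟩ := mb_rec p N
    obtain ⟨hm1, hb1⟩ := pos p hp N
    -- facts about the erased string
    have key : ∀ a : ℕ →₀ ℕ, Digits p a → NoForbiddenPattern p a → Low (N+1) a →
        Digits p (a.erase N) ∧ NoForbiddenPattern p (a.erase N) ∧ Low N (a.erase N) ∧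
        val p a = val p (a.erase N) + (a N : ℤ) * mseq p N := by
      intro a hd hf hl
      refine ⟨?_, ?_, ?_, val_erase_add p a N⟩
      · intro i
        rcases eq_or_ne i N with hin | hin
        · rw [hin, Finsupp.erase_same]; omega
        · rw [Finsupp.erase_ne hin]; exact hd i
      · rintro ⟨i, j, hij, hi, hj, hk⟩
        have hiN : i ≠ N := by
          intro h; rw [h, Finsupp.erase_same] at hi; omega
        have hjN : j ≠ N := by
          intro h; rw [h, Finsupp.erase_same] at hj; omega
        refine hf ⟨i, j, hij, ?_, ?_, ?_⟩
        · rwa [Finsupp.erase_ne hiN] at hi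
        · rwa [Finsupp.erase_ne hjN] at hj
        · intro k' hk1 hk2
          have hkk := hk k' hk1 hk2
          rcases eq_or_ne k' N with hkn | hkn
          · rw [hkn, Finsupp.erase_same] at hkk; omega
          · rwa [Finsupp.erase_ne hkn] at hkk
      · intro i hi
        rcases eq_or_ne i N with hin | hin
        · rw [hin, Finsupp.erase_same]
        · rw [Finsupp.erase_ne hin]; exact hl i (by omega)
    constructor
    · -- white bound
      intro a hd hf hl
      obtain ⟨hd0, hf0, hl0, hv⟩ := key a hd hf hl
      have hW : val p (a.erase N) < mseq p N := ihW _ hd0 hf0 hl0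
      rcases eq_or_lt_of_le (hd N) with heq | hlt
      · -- top digit is d = p - 3
        have hB0 : BCond p N (a.erase N) := by
          rintro ⟨i, hiN, hi, hk⟩
          have hiN' : i ≠ N := by omega
          refine hf ⟨i, N, hiN, by rwa [Finsupp.erase_ne hiN'] at hi, heq, ?_⟩
          intro k hk1 hk2
          have := hk k hk1 hk2
          rwa [Finsupp.erase_ne (by omega : k ≠ N)] at this
        have hB : val p (a.erase N) < bseq p N := ihB _ hd0 hf0 hl0 hB0
        have hc : ((a N : ℤ)) = (p:ℤ) - 3 := by
          rw [heq]; push_cast [Nat.cast_sub (by omega : 3 ≤ p)]; ring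
        rw [e1, hv, hc]; linarith
      · -- top digit ≤ p - 4
        have hc : ((a N : ℤ)) ≤ (p:ℤ) - 4 := by
          have : a N ≤ p - 4 := by omega
          have h4 : ((p - 4 : ℕ) : ℤ) = (p:ℤ) - 4 := by
            push_cast [Nat.cast_sub (by omega : 4 ≤ p)]; ring
          calc ((a N : ℤ)) ≤ ((p - 4 : ℕ) : ℤ) := by exact_mod_cast this
            _ = (p:ℤ) - 4 := h4
        have hmul : (a N : ℤ) * mseq p N ≤ ((p:ℤ) - 4) * mseq p N :=
          mul_le_mul_of_nonneg_right hc (by linarith)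
        have hr : ((p:ℤ) - 3) * mseq p N = ((p:ℤ) - 4) * mseq p N + mseq p N := by ring
        rw [e1, hv]; linarith
    · -- black bound
      intro a hd hf hl hBc
      obtain ⟨hd0, hf0, hl0, hv⟩ := key a hd hf hl
      have hW : val p (a.erase N) < mseq p N := ihW _ hd0 hf0 hl0
      have hne : a N ≠ p - 3 := by
        intro h
        exact hBc ⟨N, by omega, h, fun k hk1 hk2 => by omega⟩
      rcases eq_or_ne (a N) (p - 4) with heq | hne4
      · -- top digit is c = p - 4
        have hB0 : BCond p N (a.erase N) := by
          rintro ⟨i, hiN, hi, hk⟩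
          refine hBc ⟨i, by omega, by rwa [Finsupp.erase_ne (by omega : i ≠ N)] at hi, ?_⟩
          intro k' hk1 hk2
          rcases eq_or_ne k' N with hkn | hkn
          · rw [hkn]; exact heq
          · have := hk k' hk1 (by omega)
            rwa [Finsupp.erase_ne hkn] at this
        have hB : val p (a.erase N) < bseq p N := ihB _ hd0 hf0 hl0 hB0
        have hc : ((a N : ℤ)) = (p:ℤ) - 4 := by
          rw [heq]; push_cast [Nat.cast_sub (by omega : 4 ≤ p)]; ring
        rw [e2, hv, hc]; linarith
      · -- top digit ≤ p - 5
        have hc : ((a N : ℤ)) ≤ (p:ℤ) - 5 := by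
          have h5 : a N ≤ p - 5 := by have := hd N; omega
          have : ((p - 5 : ℕ) : ℤ) = (p:ℤ) - 5 := by
            push_cast [Nat.cast_sub (by omega : 5 ≤ p)]; ring
          calc ((a N : ℤ)) ≤ ((p - 5 : ℕ) : ℤ) := by exact_mod_cast h5
            _ = (p:ℤ) - 5 := this
        have hmul : (a N : ℤ) * mseq p N ≤ ((p:ℤ) - 5) * mseq p N :=
          mul_le_mul_of_nonneg_right hc (by linarith)
        have hr : ((p:ℤ) - 4) * mseq p N = ((p:ℤ) - 5) * mseq p N + mseq p N := by ring
        rw [e2, hv]; linarith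

/-- Extending a valid low string by one top digit. -/
lemma extend (p : ℕ) (hp : 5 ≤ p) (a : ℕ →₀ ℕ) (N t : ℕ) (ht : t ≤ p - 3)
    (hd : Digits p a) (hl : Low N a) (hf : NoForbiddenPattern p a)
    (hB : t = p - 3 → BCond p N a) :
    Digits p (a + Finsupp.single N t) ∧ Low (N+1) (a + Finsupp.single N t) ∧
    NoForbiddenPattern p (a + Finsupp.single N t) ∧
    val p (a + Finsupp.single N t) = val p a + (t:ℤ) * mseq p N := by
  set a' := a + Finsupp.single N t with ha'
  have happN : a' N = t := by
    simp [ha', Finsupp.add_apply, hl N le_rfl]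
  have happ : ∀ i, i ≠ N → a' i = a i := by
    intro i hi
    simp [ha', Finsupp.add_apply, Finsupp.single_eq_of_ne hi]
  refine ⟨?_, ?_, ?_, val_add_single p a N t⟩
  · intro i
    rcases eq_or_ne i N with rfl | h
    · rw [happN]; exact ht
    · rw [happ i h]; exact hd i
  · intro i hi
    have hiN : i ≠ N := by omega
    rw [happ i hiN]; exact hl i (by omega)
  · rintro ⟨i, j, hij, hi, hj, hk⟩
    rcases lt_trichotomy j N with hjN | rfl | hjN
    · -- pattern entirely below N
      refine hf ⟨i, j, hij, ?_, ?_, ?_⟩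
      · rwa [happ i (by omega)] at hi
      · rwa [happ j (by omega)] at hj
      · intro k hk1 hk2
        have := hk k hk1 hk2
        rwa [happ k (by omega)] at this
    · -- top index is N, so t = p - 3
      rw [happN] at hj
      refine hB hj ⟨i, hij, by rwa [happ i (by omega)] at hi, ?_⟩
      intro k hk1 hk2
      have := hk k hk1 hk2
      rwa [happ k (by omega)] at this
    · -- j > N : digit there is 0 ≠ p - 3
      have : a' j = 0 := by
        rw [happ j (by omega)]; exact hl j (by omega)
      omega

lemma extend_BCond (p : ℕ) (hp : 5 ≤ p) (a : ℕ →₀ ℕ) (N t : ℕ)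
    (hl : Low N a) (ht3 : t ≠ p - 3) (hB : t = p - 4 → BCond p N a) :
    BCond p (N+1) (a + Finsupp.single N t) := by
  set a' := a + Finsupp.single N t with ha'
  have happN : a' N = t := by
    simp [ha', Finsupp.add_apply, hl N le_rfl]
  have happ : ∀ i, i ≠ N → a' i = a i := by
    intro i hi
    simp [ha', Finsupp.add_apply, Finsupp.single_eq_of_ne hi]
  rintro ⟨i, hiN, hi, hk⟩
  rcases eq_or_ne i N with rfl | h
  · rw [happN] at hi; exact ht3 hi
  · have hiN' : i < N := by omega
    have htc : t = p - 4 := by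
      have := hk N (by omega) (by omega)
      rwa [happN] at this
    refine hB htc ⟨i, hiN', by rwa [happ i h] at hi, ?_⟩
    intro k hk1 hk2
    have := hk k hk1 (by omega)
    rwa [happ k (by omega)] at this

/-- Existence of representations below given bounds. -/
lemma exists_rep (p : ℕ) (hp : 5 ≤ p) : ∀ N,
    (∀ n : ℕ, (n:ℤ) < mseq p N → ∃ a : ℕ →₀ ℕ, Digits p a ∧ Low N a ∧
      NoForbiddenPattern p a ∧ val p a = n) ∧
    (∀ n : ℕ, (n:ℤ) < bseq p N → ∃ a : ℕ →₀ ℕ, Digits p a ∧ Low N a ∧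
      NoForbiddenPattern p a ∧ BCond p N a ∧ val p a = n) := by
  have hp' : (5:ℤ) ≤ (p:ℤ) := by exact_mod_cast hp
  intro N
  induction N with
  | zero =>
    have h0 : ∀ n : ℕ, (n:ℤ) < mseq p 0 → n = 0 := by
      intro n hn
      have : (n:ℤ) < 1 := hn
      omega
    have base : Digits p 0 ∧ Low 0 (0 : ℕ →₀ ℕ) ∧ NoForbiddenPattern p (0 : ℕ →₀ ℕ) ∧
        BCond p 0 (0 : ℕ →₀ ℕ) ∧ val p 0 = 0 := by
      refine ⟨fun i => by simp, fun i _ => rfl, ?_, ?_, by simp [val]⟩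
      · rintro ⟨i, j, _, hi, _⟩
        simp at hi; omega
      · rintro ⟨i, hi, _⟩; omega
    constructor
    · intro n hn
      obtain rfl := h0 n hn
      exact ⟨0, base.1, base.2.1, base.2.2.1, by simpa using base.2.2.2.2⟩
    · intro n hn
      have : n = 0 := by have : (n:ℤ) < 1 := hn; omega
      obtain rfl := this
      exact ⟨0, base.1, base.2.1, base.2.2.1, base.2.2.2.1, by simpa using base.2.2.2.2⟩
  | succ N ih =>
    obtain ⟨ihW, ihB⟩ := ih
    obtain ⟨e1, e2⟩ := mb_rec p N
    obtain ⟨hm1, hb1⟩ := pos p hp N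
    set M : ℕ := (mseq p N).toNat with hMdef
    have hM : (M:ℤ) = mseq p N := Int.toNat_of_nonneg (by linarith)
    have hM1 : 1 ≤ M := by omega
    have h3 : ((p - 3 : ℕ) : ℤ) = (p:ℤ) - 3 := by
      push_cast [Nat.cast_sub (by omega : 3 ≤ p)]; ring
    have h4 : ((p - 4 : ℕ) : ℤ) = (p:ℤ) - 4 := by
      push_cast [Nat.cast_sub (by omega : 4 ≤ p)]; ring
    constructor
    · -- white existence
      intro n hn
      rcases lt_or_ge n ((p - 3) * M) with hcase | hcase
      · -- top digit q ≤ p - 4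
        set q := n / M with hq
        set r := n % M with hr
        have hqb : q ≤ p - 4 := by
          have : q < p - 3 := by
            rw [hq, Nat.div_lt_iff_lt_mul (by omega)]
            calc n < (p-3) * M := hcase
              _ = (p-3) * M := rfl
          omega
        have hrM : r < M := Nat.mod_lt n (by omega)
        obtain ⟨a, hd, hl, hf, hv⟩ := ihW r (by rw [← hM]; exact_mod_cast hrM)
        obtain ⟨hd', hl', hf', hv'⟩ := extend p hp a N q (by omega) hd hl hf
          (fun h => absurd h (by omega))
        refine ⟨a + Finsupp.single N q, hd', hl', hf', ?_⟩
        rw [hv', hv, ← hM]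
        have hn'' : n = q * M + r := by
          rw [hq, hr, Nat.mul_comm]
          exact (Nat.div_add_mod n M).symm
        have hn' : (n:ℤ) = (q:ℤ) * M + r := by exact_mod_cast hn''
        rw [hn']; ring
      · -- top digit q = p - 3
        set r := n - (p - 3) * M with hr
        have hrval : (r:ℤ) = (n:ℤ) - ((p:ℤ) - 3) * M := by
          rw [hr, Nat.cast_sub hcase]
          push_cast [h3]; ring
        have hrb : (r:ℤ) < bseq p N := by
          rw [hrval, hM]
          rw [e1] at hn; linarith
        obtain ⟨a, hd, hl, hf, hBc, hv⟩ := ihB r hrb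
        obtain ⟨hd', hl', hf', hv'⟩ := extend p hp a N (p - 3) le_rfl hd hl hf
          (fun _ => hBc)
        refine ⟨a + Finsupp.single N (p - 3), hd', hl', hf', ?_⟩
        rw [hv', hv, h3, hrval, hM]; ring
    · -- black existence
      intro n hn
      rcases lt_or_ge n ((p - 4) * M) with hcase | hcase
      · -- top digit q ≤ p - 5
        set q := n / M with hq
        set r := n % M with hr
        have hqb : q ≤ p - 5 := by
          have : q < p - 4 := by
            rw [hq, Nat.div_lt_iff_lt_mul (by omega)]
            exact hcase
          omega
        have hrM : r < M := Nat.mod_lt n (by omega)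
        obtain ⟨a, hd, hl, hf, hv⟩ := ihW r (by rw [← hM]; exact_mod_cast hrM)
        obtain ⟨hd', hl', hf', hv'⟩ := extend p hp a N q (by omega) hd hl hf
          (fun h => absurd h (by omega))
        refine ⟨a + Finsupp.single N q, hd', hl', hf',
          extend_BCond p hp a N q hl (by omega) (fun h => absurd h (by omega)), ?_⟩
        rw [hv', hv, ← hM]
        have hn'' : n = q * M + r := by
          rw [hq, hr, Nat.mul_comm]
          exact (Nat.div_add_mod n M).symm
        have hn' : (n:ℤ) = (q:ℤ) * M + r := by exact_mod_cast hn''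
        rw [hn']; ring
      · -- top digit q = p - 4
        set r := n - (p - 4) * M with hr
        have hrval : (r:ℤ) = (n:ℤ) - ((p:ℤ) - 4) * M := by
          rw [hr, Nat.cast_sub hcase]
          push_cast [h4]; ring
        have hrb : (r:ℤ) < bseq p N := by
          rw [hrval, hM]
          rw [e2] at hn; linarith
        obtain ⟨a, hd, hl, hf, hBc, hv⟩ := ihB r hrb
        obtain ⟨hd', hl', hf', hv'⟩ := extend p hp a N (p - 4) (by omega) hd hl hf
          (fun h => absurd h (by omega))
        refine ⟨a + Finsupp.single N (p - 4), hd', hl', hf',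
          extend_BCond p hp a N (p - 4) hl (by omega) (fun _ => hBc), ?_⟩
        rw [hv', hv, h4, hrval, hM]; ring

lemma val_eq_sum_range (p : ℕ) (a : ℕ →₀ ℕ) (K : ℕ) (h : Low K a) :
    val p a = ∑ i ∈ Finset.range K, (a i : ℤ) * mseq p i := by
  rw [val, Finsupp.sum_of_support_subset a _ _ (fun i _ => by simp)]
  intro i hi
  rw [Finsupp.mem_support_iff] at hi
  rw [Finset.mem_range]
  by_contra hc
  exact hi (h i (by omega))

/-- The restriction of a valid string below `N` is valid. -/
lemma filter_valid (p : ℕ) (hp : 5 ≤ p) (b : ℕ →₀ ℕ) (N : ℕ)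
    (hd : Digits p b) (hf : NoForbiddenPattern p b) :
    Digits p (b.filter (· < N)) ∧ NoForbiddenPattern p (b.filter (· < N)) ∧
    Low N (b.filter (· < N)) ∧
    val p (b.filter (· < N)) = ∑ i ∈ Finset.range N, (b i : ℤ) * mseq p i := by
  have happ : ∀ i, i < N → (b.filter (· < N)) i = b i := fun i hi =>
    Finsupp.filter_apply_pos _ _ hi
  have happ' : ∀ i, N ≤ i → (b.filter (· < N)) i = 0 := fun i hi =>
    Finsupp.filter_apply_neg _ _ (by omega)
  refine ⟨?_, ?_, happ', ?_⟩
  · intro i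
    rcases lt_or_ge i N with h | h
    · rw [happ i h]; exact hd i
    · rw [happ' i h]; omega
  · rintro ⟨i, j, hij, hi, hj, hk⟩
    have hjN : j < N := by
      by_contra h
      rw [happ' j (by omega)] at hj; omega
    refine hf ⟨i, j, hij, ?_, ?_, ?_⟩
    · rwa [happ i (by omega)] at hi
    · rwa [happ j hjN] at hj
    · intro k hk1 hk2
      have := hk k hk1 hk2
      rwa [happ k (by omega)] at this
  · rw [val_eq_sum_range p _ N happ']
    exact Finset.sum_congr rfl fun i hi => by
      rw [happ i (Finset.mem_range.mp hi)]

/-- Key step for uniqueness. -/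
lemma key_uniq (p : ℕ) (hp : 5 ≤ p) (a b : ℕ →₀ ℕ)
    (hdb : Digits p b) (hfb : NoForbiddenPattern p b) (N : ℕ)
    (hgt : ∀ i, N < i → a i = b i) (hlt : b N < a N)
    (h : val p a = val p b) : False := by
  obtain ⟨hm1, _⟩ := pos p hp N
  -- choose K beyond both supports and beyond N
  set K := max (N + 1) (max (a.support.sup id + 1) (b.support.sup id + 1)) with hK
  have hla : Low K a := by
    intro i hi
    rw [← Finsupp.notMem_support_iff]
    intro hmem
    have := Finset.le_sup (f := id) hmem
    simp only [id] at this
    omega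
  have hlb : Low K b := by
    intro i hi
    rw [← Finsupp.notMem_support_iff]
    intro hmem
    have := Finset.le_sup (f := id) hmem
    simp only [id] at this
    omega
  have hNK : N + 1 ≤ K := le_max_left _ _
  rw [val_eq_sum_range p a K hla, val_eq_sum_range p b K hlb] at h
  have hsum : ∑ i ∈ Finset.range K, (((a i : ℤ)) - b i) * mseq p i = 0 := by
    have : ∑ i ∈ Finset.range K, (((a i : ℤ)) - b i) * mseq p i =
        (∑ i ∈ Finset.range K, (a i : ℤ) * mseq p i) -
        ∑ i ∈ Finset.range K, (b i : ℤ) * mseq p i := by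
      rw [← Finset.sum_sub_distrib]
      exact Finset.sum_congr rfl fun i _ => by ring
    rw [this, h]; ring
  have hsum2 : ∑ i ∈ Finset.range (N+1), (((a i : ℤ)) - b i) * mseq p i = 0 := by
    rw [← hsum]
    apply Finset.sum_subset (Finset.range_subset_range.mpr hNK)
    intro i _ hi
    rw [Finset.mem_range, not_lt] at hi
    rw [hgt i (by omega)]; ring
  rw [Finset.sum_range_succ] at hsum2
  -- bound the low part
  obtain ⟨hdf, hff, hlf, hvf⟩ := filter_valid p hp b N hdb hfb
  have hbb : ∑ i ∈ Finset.range N, (b i : ℤ) * mseq p i < mseq p N := by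
    rw [← hvf]
    exact (bound p hp N).1 _ hdf hff hlf
  have hba : (0:ℤ) ≤ ∑ i ∈ Finset.range N, (a i : ℤ) * mseq p i := by
    apply Finset.sum_nonneg
    intro i _
    have := (pos p hp i).1
    positivity
  have hsplit : ∑ i ∈ Finset.range N, (((a i : ℤ)) - b i) * mseq p i =
      (∑ i ∈ Finset.range N, (a i : ℤ) * mseq p i) -
      ∑ i ∈ Finset.range N, (b i : ℤ) * mseq p i := by
    rw [← Finset.sum_sub_distrib]
    exact Finset.sum_congr rfl fun i _ => by ring
  have htop : mseq p N ≤ (((a N : ℤ)) - b N) * mseq p N := by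
    have h1 : (1:ℤ) ≤ ((a N : ℤ)) - b N := by
      have : (b N : ℤ) < a N := by exact_mod_cast hlt
      omega
    nlinarith
  rw [hsplit] at hsum2
  linarith

lemma val_injective (p : ℕ) (hp : 5 ≤ p) (a b : ℕ →₀ ℕ)
    (hda : Digits p a) (hfa : NoForbiddenPattern p a)
    (hdb : Digits p b) (hfb : NoForbiddenPattern p b)
    (h : val p a = val p b) : a = b := by
  by_contra hne
  set D := (a.support ∪ b.support).filter (fun i => a i ≠ b i) with hD
  have hDne : D.Nonempty := by
    obtain ⟨i, hi⟩ := Finsupp.ne_iff.mp hne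
    refine ⟨i, Finset.mem_filter.mpr ⟨?_, hi⟩⟩
    rcases eq_or_ne (a i) 0 with h0 | h0
    · exact Finset.mem_union_right _ (Finsupp.mem_support_iff.mpr (by omega))
    · exact Finset.mem_union_left _ (Finsupp.mem_support_iff.mpr h0)
  set N := D.max' hDne with hN
  have hNmem := D.max'_mem hDne
  have hNe : a N ≠ b N := (Finset.mem_filter.mp hNmem).2
  have hgt : ∀ i, N < i → a i = b i := by
    intro i hi
    by_contra hc
    have : i ∈ D := by
      refine Finset.mem_filter.mpr ⟨?_, hc⟩
      rcases eq_or_ne (a i) 0 with h0 | h0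
      · exact Finset.mem_union_right _ (Finsupp.mem_support_iff.mpr (by omega))
      · exact Finset.mem_union_left _ (Finsupp.mem_support_iff.mpr h0)
    have := D.le_max' i this
    omega
  rcases lt_or_gt_of_ne hNe with hlt | hlt
  · exact key_uniq p hp b a hda hfa N (fun i hi => (hgt i hi).symm) hlt h.symm
  · exact key_uniq p hp a b hdb hfb N hgt hlt h

end MetallicAux

/-- every positive integer has exactly one metallic
representation avoiding the forbidden pattern. -/
theorem existsUnique_metallic_code (p : ℕ) (hp : 5 ≤ p) (n : ℕ) (hn : 0 < n) :
    ∃! a : ℕ →₀ ℕ, (∀ i, a i ≤ p - 3) ∧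
      (n : ℤ) = a.sum (fun i c => (c : ℤ) * mseq p i) ∧
      NoForbiddenPattern p a := by
  obtain ⟨a, hd, _, hf, hv⟩ := (MetallicAux.exists_rep p hp n).1 n
    (by have := MetallicAux.m_ge p hp n; omega)
  refine ⟨a, ⟨hd, hv.symm, hf⟩, ?_⟩
  rintro b ⟨hdb, hvb, hfb⟩
  exact MetallicAux.val_injective p hp b a hdb hfb hd hf
    (by show MetallicAux.val p b = MetallicAux.val p a; rw [MetallicAux.val, ← hvb, hv])
end

section
/- Let p ≥ 5 be an integer. For every n ∈ ℕ one has b (n+1) = (p−4)·∑_{i=1}^{n} m i + (p−3); that is, the metallic code of b (n+1) is the word c^{n} d, where d = p − 3 and c = p − 4. -/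
lemma msum_rec (p : ℕ) (n : ℕ) :
    (∑ i ∈ Finset.Icc 1 (n + 2), mseq p i) =
      ((p : ℤ) - 2) * (∑ i ∈ Finset.Icc 1 (n + 1), mseq p i)
        - (∑ i ∈ Finset.Icc 1 n, mseq p i) + ((p : ℤ) - 3) := by
  induction n with
  | zero =>
      simp [Finset.sum_Icc_succ_top, mseq]
      ring
  | succ n ih =>
      have h1 : (∑ i ∈ Finset.Icc 1 (n + 3), mseq p i) =
          (∑ i ∈ Finset.Icc 1 (n + 2), mseq p i) + mseq p (n + 3) :=
        Finset.sum_Icc_succ_top (by omega) _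
      have h2 : (∑ i ∈ Finset.Icc 1 (n + 2), mseq p i) =
          (∑ i ∈ Finset.Icc 1 (n + 1), mseq p i) + mseq p (n + 2) :=
        Finset.sum_Icc_succ_top (by omega) _
      have h3 : (∑ i ∈ Finset.Icc 1 (n + 1), mseq p i) =
          (∑ i ∈ Finset.Icc 1 n, mseq p i) + mseq p (n + 1) :=
        Finset.sum_Icc_succ_top (by omega) _
      have hm : mseq p (n + 3) =
          ((p : ℤ) - 2) * mseq p (n + 2) - mseq p (n + 1) := rfl
      linear_combination h1 + hm - ((p : ℤ) - 2) * h2 + ih + h3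

/-- for every `n`, `b (n+1) = (p-4) ∑_{i=1}^{n} m i + (p-3)`,
i.e. the metallic code of `b (n+1)` is `c^n d` with `d = p-3`, `c = p-4`. -/
theorem bseq_code (p : ℕ) (hp : 5 ≤ p) (n : ℕ) :
    bseq p (n + 1) = ((p : ℤ) - 4) * (∑ i ∈ Finset.Icc 1 n, mseq p i)
      + ((p : ℤ) - 3) := by
  induction n using Nat.twoStepInduction with
  | zero => simp [bseq]
  | one =>
      simp [bseq, mseq, Finset.sum_Icc_succ_top]
      ring
  | more n ih1 ih2 =>
      have hb : bseq p (n + 3) =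
          ((p : ℤ) - 2) * bseq p (n + 2) - bseq p (n + 1) := rfl
      linear_combination hb + ((p : ℤ) - 2) * ih2 - ih1
        - ((p : ℤ) - 4) * msum_rec p n
end

section
/- Let p ≥ 5 be an integer. For every n ∈ ℕ and every integer a with 2 ≤ a ≤ p − 3 one has M (n+2) + b (n+2) + (a−2)·m (n+2) = a·m (n+2) + M n; moreover M (n+2) + b (n+2) + (p−4)·m (n+2) = m (n+3) + M (n+1), and M (n+2) + b (n+2) + (p−3)·m (n+2) = M (n+3). (These are the numbers of the rightmost nodes, on level n+3 of the white metallic tree, of the subtrees rooted at the successive sons of the root.) -/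
/-- `Msum p n = ∑_{i=0}^{n} m i`, the partial sums of the white metallic sequence. -/
def Msum (p : ℕ) (n : ℕ) : ℤ := ∑ i ∈ Finset.range (n + 1), mseq p i

lemma bseq_eq (p : ℕ) : ∀ n : ℕ, bseq p (n + 1) = mseq p (n + 1) - mseq p n
  | 0 => by simp [bseq, mseq]; ring
  | 1 => by simp [bseq, mseq]; ring
  | (n + 2) => by
    have h1 := bseq_eq p n
    have h2 := bseq_eq p (n + 1)
    show bseq p (n + 1 + 2) = _
    rw [bseq, h1, h2]
    show _ = ((p : ℤ) - 2) * mseq p (n + 2) - mseq p (n + 1)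
        - (((p : ℤ) - 2) * mseq p (n + 1) - mseq p n)
    ring

lemma Msum_succ (p n : ℕ) : Msum p (n + 1) = Msum p n + mseq p (n + 1) := by
  simp [Msum, Finset.sum_range_succ]

/-- for every `n` and every integer `a` with `2 ≤ a ≤ p - 3`,
`M (n+2) + b (n+2) + (a-2) m (n+2) = a * m (n+2) + M n`; moreover
`M (n+2) + b (n+2) + (p-4) m (n+2) = m (n+3) + M (n+1)` and
`M (n+2) + b (n+2) + (p-3) m (n+2) = M (n+3)`. -/
theorem rightmost_nodes_of_subtrees (p : ℕ) (hp : 5 ≤ p) (n : ℕ) :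
    (∀ a : ℤ, 2 ≤ a → a ≤ (p : ℤ) - 3 →
      Msum p (n + 2) + bseq p (n + 2) + (a - 2) * mseq p (n + 2)
        = a * mseq p (n + 2) + Msum p n) ∧
    Msum p (n + 2) + bseq p (n + 2) + ((p : ℤ) - 4) * mseq p (n + 2)
      = mseq p (n + 3) + Msum p (n + 1) ∧
    Msum p (n + 2) + bseq p (n + 2) + ((p : ℤ) - 3) * mseq p (n + 2)
      = Msum p (n + 3) := by
  have hb : bseq p (n + 2) = mseq p (n + 2) - mseq p (n + 1) := bseq_eq p (n + 1)
  have hm3 : mseq p (n + 3) = ((p : ℤ) - 2) * mseq p (n + 2) - mseq p (n + 1) := rfl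
  have hM1 : Msum p (n + 1) = Msum p n + mseq p (n + 1) := Msum_succ p n
  have hM2 : Msum p (n + 2) = Msum p (n + 1) + mseq p (n + 2) := Msum_succ p (n + 1)
  have hM3 : Msum p (n + 3) = Msum p (n + 2) + mseq p (n + 3) := Msum_succ p (n + 2)
  refine ⟨fun a _ _ => ?_, ?_, ?_⟩
  · linear_combination hM2 + hM1 + hb
  · linear_combination hM2 + hb - hm3
  · linear_combination -hM3 + hb - hm3
end
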